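/- arXiv:1603.06498 — 2 statements merged into one kernel-verified Lean document; each statement's English description precedes it below -/
import Mathlib

section
/- For every real parameter a > -1 and every x ∈ ℝ, the strict Turán-type inequality F_{a+1}(x)² < F_a(x) · F_{a+2}(x) holds. -/
open MeasureTheory Real

/-- `Fa a x = ∫₀^∞ exp(-t² - 2xt) · t^a dt`, a Hermite-type function of negative degree. -/
noncomputable def Fa (a x : ℝ) : ℝ :=
  ∫ t in Set.Ioi (0 : ℝ), Real.exp (-(t ^ 2) - 2 * x * t) * t ^ a

lemma Fa_integrable (b x : ℝ) (hb : -1 < b) :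
    IntegrableOn (fun t : ℝ => Real.exp (-(t ^ 2) - 2 * x * t) * t ^ b) (Set.Ioi 0) := by
  have h := ((integrableOn_rpow_mul_exp_neg_mul_sq (by norm_num : (0:ℝ) < 1/2) hb).const_mul
    (Real.exp (2 * x ^ 2)))
  apply Integrable.mono' h
  · apply Measurable.aestronglyMeasurable
    fun_prop
  · have hm : MeasurableSet (Set.Ioi (0:ℝ)) := measurableSet_Ioi
    filter_upwards [ae_restrict_mem hm] with t ht
    have ht0 : 0 < t := ht
    have hrp : 0 ≤ t ^ b := Real.rpow_nonneg ht0.le b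
    rw [Real.norm_eq_abs, abs_mul, abs_of_nonneg (Real.exp_pos _).le, abs_of_nonneg hrp]
    have hexp : Real.exp (-(t ^ 2) - 2 * x * t) ≤
        Real.exp (2 * x ^ 2) * Real.exp (-(1/2) * t ^ 2) := by
      rw [← Real.exp_add]
      apply Real.exp_le_exp.2
      nlinarith [sq_nonneg (t + 2 * x)]
    calc Real.exp (-(t ^ 2) - 2 * x * t) * t ^ b
        ≤ (Real.exp (2 * x ^ 2) * Real.exp (-(1/2) * t ^ 2)) * t ^ b :=
          mul_le_mul_of_nonneg_right hexp hrp
      _ = Real.exp (2 * x ^ 2) * (t ^ b * Real.exp (-(1/2) * t ^ 2)) := by ring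

lemma Fa_pos (b x : ℝ) (hb : -1 < b) : 0 < Fa b x := by
  rw [Fa]
  have hm : MeasurableSet (Set.Ioi (0:ℝ)) := measurableSet_Ioi
  rw [setIntegral_pos_iff_support_of_nonneg_ae]
  · have hsub : Set.Ioi (0:ℝ) ⊆ Function.support
        (fun t : ℝ => Real.exp (-(t ^ 2) - 2 * x * t) * t ^ b) ∩ Set.Ioi 0 := by
      intro t ht
      refine ⟨?_, ht⟩
      exact (mul_pos (Real.exp_pos _) (Real.rpow_pos_of_pos ht b)).ne'
    calc (0 : ENNReal) < volume (Set.Ioi (0:ℝ)) := by simp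
      _ ≤ _ := measure_mono hsub
  · filter_upwards [ae_restrict_mem hm] with t ht
    exact (mul_pos (Real.exp_pos _) (Real.rpow_pos_of_pos ht b)).le
  · exact Fa_integrable b x hb

/-- Strict Turán-type inequality: `F_{a+1}(x)² < F_a(x) · F_{a+2}(x)` for all `a > -1`, `x ∈ ℝ`. -/
theorem turan_inequality_Fa (a : ℝ) (ha : -1 < a) (x : ℝ) :
    (Fa (a + 1) x) ^ 2 < Fa a x * Fa (a + 2) x := by
  have ha1 : -1 < a + 1 := by linarith
  have ha2 : -1 < a + 2 := by linarith
  have h0 := Fa_pos a x ha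
  have h1 := Fa_pos (a+1) x ha1
  set L := Fa (a+1) x / Fa a x with hL
  have hI0 := Fa_integrable a x ha
  have hI1 := Fa_integrable (a+1) x ha1
  have hI2 := Fa_integrable (a+2) x ha2
  have hm : MeasurableSet (Set.Ioi (0:ℝ)) := measurableSet_Ioi
  have key : 0 < Fa (a+2) x - 2 * L * Fa (a+1) x + L^2 * Fa a x := by
    have hIs : IntegrableOn (fun t : ℝ =>
        Real.exp (-(t ^ 2) - 2 * x * t) * t ^ (a+2)
        - 2 * L * (Real.exp (-(t ^ 2) - 2 * x * t) * t ^ (a+1))) (Set.Ioi 0) :=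
      hI2.sub (hI1.const_mul _)
    have hIq : IntegrableOn (fun t : ℝ =>
        Real.exp (-(t ^ 2) - 2 * x * t) * t ^ (a+2)
        - 2 * L * (Real.exp (-(t ^ 2) - 2 * x * t) * t ^ (a+1))
        + L^2 * (Real.exp (-(t ^ 2) - 2 * x * t) * t ^ a)) (Set.Ioi 0) :=
      hIs.add (hI0.const_mul _)
    have heq : (∫ t in Set.Ioi (0:ℝ),
          (Real.exp (-(t ^ 2) - 2 * x * t) * t ^ (a+2)
          - 2 * L * (Real.exp (-(t ^ 2) - 2 * x * t) * t ^ (a+1))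
          + L^2 * (Real.exp (-(t ^ 2) - 2 * x * t) * t ^ a)))
        = Fa (a+2) x - 2 * L * Fa (a+1) x + L^2 * Fa a x := by
      rw [integral_add hIs (hI0.const_mul _), integral_sub hI2 (hI1.const_mul _),
        integral_const_mul, integral_const_mul]
      simp [Fa]
    rw [← heq]
    rw [setIntegral_pos_iff_support_of_nonneg_ae]
    · have hsub : Set.Ioi (0:ℝ) \ {L} ⊆ Function.support (fun t : ℝ =>
          Real.exp (-(t ^ 2) - 2 * x * t) * t ^ (a+2)
          - 2 * L * (Real.exp (-(t ^ 2) - 2 * x * t) * t ^ (a+1))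
          + L^2 * (Real.exp (-(t ^ 2) - 2 * x * t) * t ^ a)) ∩ Set.Ioi 0 := by
        rintro t ⟨ht, htL⟩
        refine ⟨?_, ht⟩
        have ht0 : (0:ℝ) < t := ht
        have e1 : t ^ (a+1) = t ^ a * t := Real.rpow_add_one ht0.ne' a
        have e2 : t ^ (a+2) = t ^ a * t^2 := by
          rw [show a + 2 = (a+1)+1 by ring, Real.rpow_add_one ht0.ne', e1]; ring
        simp only [Function.mem_support]
        have e3 : Real.exp (-(t ^ 2) - 2 * x * t) * t ^ (a+2)
            - 2 * L * (Real.exp (-(t ^ 2) - 2 * x * t) * t ^ (a+1))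
            + L^2 * (Real.exp (-(t ^ 2) - 2 * x * t) * t ^ a)
            = Real.exp (-(t ^ 2) - 2 * x * t) * t ^ a * (t - L)^2 := by
          rw [e1, e2]; ring
        rw [e3]
        have hne : t - L ≠ 0 := sub_ne_zero.2 (by simpa using htL)
        exact (mul_pos (mul_pos (Real.exp_pos _) (Real.rpow_pos_of_pos ht0 a))
          (by positivity)).ne'
      calc (0 : ENNReal) < volume (Set.Ioi (0:ℝ) \ {L}) := by
            rw [measure_diff_null (measure_singleton L)]; simp
        _ ≤ _ := measure_mono hsub
    · filter_upwards [ae_restrict_mem hm] with t ht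
      have ht0 : (0:ℝ) < t := ht
      have e1 : t ^ (a+1) = t ^ a * t := Real.rpow_add_one ht0.ne' a
      have e2 : t ^ (a+2) = t ^ a * t^2 := by
        rw [show a + 2 = (a+1)+1 by ring, Real.rpow_add_one ht0.ne', e1]; ring
      have e3 : Real.exp (-(t ^ 2) - 2 * x * t) * t ^ (a+2)
          - 2 * L * (Real.exp (-(t ^ 2) - 2 * x * t) * t ^ (a+1))
          + L^2 * (Real.exp (-(t ^ 2) - 2 * x * t) * t ^ a)
          = Real.exp (-(t ^ 2) - 2 * x * t) * t ^ a * (t - L)^2 := by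
        rw [e1, e2]; ring
      rw [e3]; positivity
    · exact hIq
  have hLval : L * Fa a x = Fa (a+1) x := div_mul_cancel₀ _ h0.ne'
  nlinarith [mul_pos key h0, hLval, sq_nonneg (L * Fa a x)]
end

section
/- The function Φ is infinitely differentiable, and for every integer n ≥ 1 and every x ∈ ℝ its n-th derivative satisfies Φ⁽ⁿ⁾(x) = (2√β/σ̂)ⁿ · F_{a+n}(u(x)); in particular Φ⁽ⁿ⁾(x) > 0. Moreover, for every integer n ≥ 1 and every x ∈ ℝ the strict Turán-type inequality (Φ⁽ⁿ⁾(x))² < Φ⁽ⁿ⁻¹⁾(x) · Φ⁽ⁿ⁺¹⁾(x) holds; in particular (Φ'(x))² < Φ(x)·Φ''(x) for all x. -/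
open MeasureTheory Real

/-- `Phi β σh δ c x = F_a(u(x))` with `a = δ/β - 1` and `u(x) = (c - βx)/(√β·σ̂)`. -/
noncomputable def Phi (β σh δ c : ℝ) (x : ℝ) : ℝ :=
  Fa (δ / β - 1) ((c - β * x) / (Real.sqrt β * σh))

open Set in
lemma g_meas (a x : ℝ) :
    AEStronglyMeasurable (fun t : ℝ => Real.exp (-(t ^ 2) - 2 * x * t) * t ^ a)
      (volume.restrict (Set.Ioi (0:ℝ))) := by
  apply ContinuousOn.aestronglyMeasurable _ measurableSet_Ioi
  intro t ht
  have h1 : ContinuousAt (fun t : ℝ => Real.exp (-(t ^ 2) - 2 * x * t)) t := by fun_prop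
  have h2 : ContinuousAt (fun t : ℝ => t ^ a) t :=
    Real.continuousAt_rpow_const t a (Or.inl (ne_of_gt ht))
  exact (h1.mul h2).continuousWithinAt

lemma exp_bound {M x t : ℝ} (hx : |x| ≤ M) (ht : 0 ≤ t) :
    Real.exp (-(t ^ 2) - 2 * x * t) ≤ Real.exp (2 * M ^ 2) * Real.exp (-(1/2) * t ^ 2) := by
  rw [← Real.exp_add]
  apply Real.exp_le_exp.2
  have hx1 : -M ≤ x := neg_le_of_abs_le hx
  nlinarith [sq_nonneg (t - 2*M), mul_nonneg (by linarith : (0:ℝ) ≤ M + x) ht]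

lemma integrableOn_g {a : ℝ} (ha : -1 < a) (x : ℝ) :
    IntegrableOn (fun t : ℝ => Real.exp (-(t ^ 2) - 2 * x * t) * t ^ a) (Set.Ioi 0) := by
  have hdom : IntegrableOn
      (fun t : ℝ => Real.exp (2 * |x| ^ 2) * (t ^ a * Real.exp (-(1/2) * t ^ 2))) (Set.Ioi 0) :=
    (integrableOn_rpow_mul_exp_neg_mul_sq (by norm_num) ha).const_mul _
  refine Integrable.mono' hdom (g_meas a x) ?_
  filter_upwards [ae_restrict_mem measurableSet_Ioi] with t ht
  have ht0 : (0:ℝ) < t := ht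
  have hta : (0:ℝ) ≤ t ^ a := (Real.rpow_pos_of_pos ht0 a).le
  rw [Real.norm_eq_abs, abs_mul, abs_of_pos (Real.exp_pos _), abs_of_nonneg hta]
  have hb := exp_bound (le_refl |x|) ht0.le
  calc Real.exp (-(t ^ 2) - 2 * x * t) * t ^ a
      ≤ (Real.exp (2 * |x| ^ 2) * Real.exp (-(1/2) * t ^ 2)) * t ^ a :=
        mul_le_mul_of_nonneg_right hb hta
    _ = Real.exp (2 * |x| ^ 2) * (t ^ a * Real.exp (-(1/2) * t ^ 2)) := by ring

lemma Fa_pos_s1 {a : ℝ} (ha : -1 < a) (x : ℝ) : 0 < Fa a x := by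
  rw [Fa, setIntegral_pos_iff_support_of_nonneg_ae
    (by filter_upwards [ae_restrict_mem measurableSet_Ioi] with t ht
        exact (mul_pos (Real.exp_pos _) (Real.rpow_pos_of_pos ht a)).le)
    (integrableOn_g ha x)]
  refine lt_of_lt_of_le ?_ (measure_mono (show Set.Ioi (0:ℝ) ⊆ _ from ?_))
  · rw [Real.volume_Ioi]; exact ENNReal.zero_lt_top
  · intro t ht
    exact ⟨Function.mem_support.2
      (ne_of_gt (mul_pos (Real.exp_pos _) (Real.rpow_pos_of_pos ht a))), ht⟩

lemma hasDerivAt_Fa {a : ℝ} (ha : -1 < a) (x : ℝ) :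
    HasDerivAt (Fa a) (-2 * Fa (a + 1) x) x := by
  set M : ℝ := |x| + 1 with hM
  have hbound : ∀ᵐ t ∂(volume.restrict (Set.Ioi (0:ℝ))), ∀ y ∈ Metric.ball x 1,
      ‖-2 * (Real.exp (-(t ^ 2) - 2 * y * t) * t ^ (a+1))‖
        ≤ 2 * Real.exp (2 * M ^ 2) * (t ^ (a+1) * Real.exp (-(1/2) * t ^ 2)) := by
    filter_upwards [ae_restrict_mem measurableSet_Ioi] with t ht y hy
    have ht0 : (0:ℝ) < t := ht
    have hta : (0:ℝ) ≤ t ^ (a+1) := (Real.rpow_pos_of_pos ht0 _).le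
    have hy' : |y| ≤ M := by
      have h1 : |y - x| < 1 := by rw [← Real.norm_eq_abs]; exact mem_ball_iff_norm.mp hy
      have h2 := abs_sub_abs_le_abs_sub y x
      rw [hM]; linarith
    rw [Real.norm_eq_abs, abs_mul, abs_mul, abs_of_pos (Real.exp_pos _), abs_of_nonneg hta,
      abs_neg, abs_two]
    have hb := exp_bound hy' ht0.le
    calc (2:ℝ) * (Real.exp (-(t ^ 2) - 2 * y * t) * t ^ (a+1))
        ≤ 2 * ((Real.exp (2 * M ^ 2) * Real.exp (-(1/2) * t ^ 2)) * t ^ (a+1)) := by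
          have := mul_le_mul_of_nonneg_right hb hta
          linarith
      _ = 2 * Real.exp (2 * M ^ 2) * (t ^ (a+1) * Real.exp (-(1/2) * t ^ 2)) := by ring
  have hbi : Integrable (fun t : ℝ => 2 * Real.exp (2 * M ^ 2) * (t ^ (a+1) * Real.exp (-(1/2) * t ^ 2)))
      (volume.restrict (Set.Ioi (0:ℝ))) :=
    ((integrableOn_rpow_mul_exp_neg_mul_sq (by norm_num) (by linarith)).const_mul _)
  have hdiff : ∀ᵐ t ∂(volume.restrict (Set.Ioi (0:ℝ))), ∀ y ∈ Metric.ball x 1,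
      HasDerivAt (fun y : ℝ => Real.exp (-(t ^ 2) - 2 * y * t) * t ^ a)
        (-2 * (Real.exp (-(t ^ 2) - 2 * y * t) * t ^ (a+1))) y := by
    filter_upwards [ae_restrict_mem measurableSet_Ioi] with t ht y _
    have ht0 : (0:ℝ) < t := ht
    have h1 : HasDerivAt (fun y : ℝ => -(t ^ 2) - 2 * y * t) (-(2 * t)) y := by
      have h0 : HasDerivAt (fun y : ℝ => 2 * y * t) (2 * t) y := by
        simpa using ((hasDerivAt_id y).const_mul 2).mul_const t
      exact h0.const_sub (-(t^2))
    have h2 := (h1.exp).mul_const (t ^ a)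
    refine h2.congr_deriv ?_
    rw [Real.rpow_add ht0, Real.rpow_one]
    ring
  have key := hasDerivAt_integral_of_dominated_loc_of_deriv_le (μ := volume.restrict (Set.Ioi (0:ℝ)))
    (F := fun y t => Real.exp (-(t ^ 2) - 2 * y * t) * t ^ a)
    (F' := fun y t => -2 * (Real.exp (-(t ^ 2) - 2 * y * t) * t ^ (a+1)))
    (x₀ := x) (Metric.ball_mem_nhds x one_pos)
    (Filter.Eventually.of_forall fun y => g_meas a y)
    (integrableOn_g ha x)
    ((g_meas (a+1) x).const_mul (-2))
    hbound hbi hdiff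
  rcases key with ⟨_, hd⟩
  have heq : (∫ t in Set.Ioi (0:ℝ), -2 * (Real.exp (-(t ^ 2) - 2 * x * t) * t ^ (a+1)))
      = -2 * Fa (a+1) x := by rw [integral_const_mul]; rfl
  rw [heq] at hd
  exact hd

lemma Fa_turan {b : ℝ} (hb : 0 < b) (x : ℝ) :
    Fa b x ^ 2 < Fa (b - 1) x * Fa (b + 1) x := by
  have hbm : (-1:ℝ) < b - 1 := by linarith
  have hb0 : (-1:ℝ) < b := by linarith
  have hbp : (-1:ℝ) < b + 1 := by linarith
  set A := Fa (b - 1) x with hA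
  set B := Fa b x with hB
  set C := Fa (b + 1) x with hC
  have hCpos : 0 < C := Fa_pos_s1 hbp x
  have hBpos : 0 < B := Fa_pos_s1 hb0 x
  set lam : ℝ := B / C with hlam
  have hlampos : 0 < lam := div_pos hBpos hCpos
  set w : ℝ → ℝ := fun t => Real.exp (-(t ^ 2) - 2 * x * t) with hw
  set h : ℝ → ℝ := fun t => w t * (t ^ (b-1)) * (1 - lam * t) ^ 2 with hh
  have hsplit : ∀ t ∈ Set.Ioi (0:ℝ), h t =
      w t * t ^ (b-1) - 2 * lam * (w t * t ^ b) + lam ^ 2 * (w t * t ^ (b+1)) := by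
    intro t ht
    have ht0 : (0:ℝ) < t := ht
    have e1 : t ^ b = t ^ (b-1) * t := by
      rw [← Real.rpow_add_one (ne_of_gt ht0)]; norm_num
    have e2 : t ^ (b+1) = t ^ b * t := by
      rw [← Real.rpow_add_one (ne_of_gt ht0)]
    rw [hh, e2, e1]
    ring
  have hint1 : IntegrableOn (fun t => w t * t ^ (b-1)) (Set.Ioi (0:ℝ)) := integrableOn_g hbm x
  have hint2 : IntegrableOn (fun t => w t * t ^ b) (Set.Ioi (0:ℝ)) := integrableOn_g hb0 x
  have hint3 : IntegrableOn (fun t => w t * t ^ (b+1)) (Set.Ioi (0:ℝ)) := integrableOn_g hbp x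
  have hinth : IntegrableOn h (Set.Ioi (0:ℝ)) := by
    apply IntegrableOn.congr_fun _ (fun t ht => (hsplit t ht).symm) measurableSet_Ioi
    exact (hint1.sub (hint2.const_mul _)).add (hint3.const_mul _)
  have hval : (∫ t in Set.Ioi (0:ℝ), h t) = A - 2 * lam * B + lam ^ 2 * C := by
    rw [setIntegral_congr_fun measurableSet_Ioi hsplit]
    have hint2' : Integrable (fun t => 2 * lam * (w t * t ^ b))
        (volume.restrict (Set.Ioi (0:ℝ))) := hint2.const_mul _
    have hint12 : Integrable (fun t => w t * t ^ (b-1) - 2 * lam * (w t * t ^ b))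
        (volume.restrict (Set.Ioi (0:ℝ))) := hint1.sub hint2'
    have hint3' : Integrable (fun t => lam ^ 2 * (w t * t ^ (b+1)))
        (volume.restrict (Set.Ioi (0:ℝ))) := hint3.const_mul _
    rw [integral_add hint12 hint3', integral_sub hint1 hint2',
      integral_const_mul, integral_const_mul]
    rfl
  have hpos : 0 < ∫ t in Set.Ioi (0:ℝ), h t := by
    rw [setIntegral_pos_iff_support_of_nonneg_ae
      (by filter_upwards [ae_restrict_mem measurableSet_Ioi] with t ht
          exact mul_nonneg (mul_nonneg (Real.exp_pos _).le (Real.rpow_pos_of_pos ht _).le)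
            (sq_nonneg _))
      hinth]
    refine lt_of_lt_of_le ?_ (measure_mono (show Set.Ioi (0:ℝ) \ {lam⁻¹} ⊆ _ from ?_))
    · rw [measure_diff_null (measure_singleton _), Real.volume_Ioi]
      exact ENNReal.zero_lt_top
    · rintro t ⟨ht, htne⟩
      have ht0 : (0:ℝ) < t := ht
      have h2 : 1 - lam * t ≠ 0 := by
        intro hc
        apply htne
        have : t = lam⁻¹ := by field_simp at hc ⊢; linarith
        simp [this]
      refine ⟨Function.mem_support.2 ?_, ht⟩
      have : 0 < w t * t ^ (b-1) * (1 - lam * t) ^ 2 :=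
        mul_pos (mul_pos (Real.exp_pos _) (Real.rpow_pos_of_pos ht0 _))
          (by positivity)
      exact ne_of_gt this
  rw [hval] at hpos
  have hmul : 0 < (A - 2 * lam * B + lam ^ 2 * C) * C := mul_pos hpos hCpos
  have hexp : (A - 2 * lam * B + lam ^ 2 * C) * C = A * C - B ^ 2 := by
    rw [hlam]; field_simp; ring
  rw [hexp] at hmul
  linarith

noncomputable def Ga (a : ℝ) (z : ℂ) : ℂ :=
  ∫ t in Set.Ioi (0 : ℝ), Complex.exp (-(t:ℂ) ^ 2 - 2 * z * t) * ((t ^ a : ℝ) : ℂ)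

lemma Ga_norm (a : ℝ) (z : ℂ) {t : ℝ} (ht : 0 < t) :
    ‖Complex.exp (-(t:ℂ) ^ 2 - 2 * z * t) * ((t ^ a : ℝ) : ℂ)‖
      = Real.exp (-(t ^ 2) - 2 * z.re * t) * t ^ a := by
  rw [norm_mul, Complex.norm_exp, Complex.norm_real, Real.norm_eq_abs,
    abs_of_pos (Real.rpow_pos_of_pos ht a)]
  have hre : (-(t:ℂ) ^ 2 - 2 * z * t).re = -(t ^ 2) - 2 * z.re * t := by
    simp [Complex.sub_re, Complex.mul_re, ← Complex.ofReal_pow]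
  rw [hre]

lemma Ga_meas (a : ℝ) (z : ℂ) :
    AEStronglyMeasurable (fun t : ℝ => Complex.exp (-(t:ℂ) ^ 2 - 2 * z * t) * ((t ^ a : ℝ) : ℂ))
      (volume.restrict (Set.Ioi (0:ℝ))) := by
  apply ContinuousOn.aestronglyMeasurable _ measurableSet_Ioi
  intro t ht
  have h1 : ContinuousAt (fun t : ℝ => Complex.exp (-(t:ℂ) ^ 2 - 2 * z * t)) t := by fun_prop
  have h2 : ContinuousAt (fun t : ℝ => ((t ^ a : ℝ) : ℂ)) t :=
    Complex.continuous_ofReal.continuousAt.comp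
      (Real.continuousAt_rpow_const t a (Or.inl (ne_of_gt ht)))
  exact (h1.mul h2).continuousWithinAt

lemma Ga_integrable {a : ℝ} (ha : -1 < a) (z : ℂ) :
    Integrable (fun t : ℝ => Complex.exp (-(t:ℂ) ^ 2 - 2 * z * t) * ((t ^ a : ℝ) : ℂ))
      (volume.restrict (Set.Ioi (0:ℝ))) := by
  refine Integrable.mono' (integrableOn_g ha z.re) (Ga_meas a z) ?_
  filter_upwards [ae_restrict_mem measurableSet_Ioi] with t ht
  rw [Ga_norm a z ht]

lemma differentiable_Ga {a : ℝ} (ha : -1 < a) : Differentiable ℂ (Ga a) := by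
  intro z₀
  set M : ℝ := ‖z₀‖ + 1 with hM
  have hbound : ∀ᵐ (t : ℝ) ∂(volume.restrict (Set.Ioi (0:ℝ))), ∀ z ∈ Metric.ball z₀ 1,
      ‖(-2 * (t:ℂ)) * (Complex.exp (-(t:ℂ) ^ 2 - 2 * z * t) * ((t ^ a : ℝ) : ℂ))‖
        ≤ 2 * Real.exp (2 * M ^ 2) * (t ^ (a+1) * Real.exp (-(1/2) * t ^ 2)) := by
    filter_upwards [ae_restrict_mem measurableSet_Ioi] with t ht z hz
    have ht0 : (0:ℝ) < t := ht
    have hre : |z.re| ≤ M := by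
      have h1 : ‖z - z₀‖ < 1 := mem_ball_iff_norm.mp hz
      have h2 : |z.re| ≤ ‖z‖ := Complex.abs_re_le_norm z
      have h3 : ‖z‖ ≤ ‖z - z₀‖ + ‖z₀‖ := by simpa using norm_add_le (z - z₀) z₀
      rw [hM]; linarith
    rw [norm_mul, Ga_norm a z ht0]
    have hnorm2t : ‖(-2 * (t:ℂ))‖ = 2 * t := by
      rw [norm_mul]
      simp [Complex.norm_real, abs_of_pos ht0]
    rw [hnorm2t]
    have hb := exp_bound hre ht0.le
    have hta : (0:ℝ) ≤ t ^ a := (Real.rpow_pos_of_pos ht0 a).le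
    have e1 : t ^ (a+1) = t ^ a * t := by
      rw [← Real.rpow_add_one (ne_of_gt ht0)]
    calc 2 * t * (Real.exp (-(t ^ 2) - 2 * z.re * t) * t ^ a)
        ≤ 2 * t * ((Real.exp (2 * M ^ 2) * Real.exp (-(1/2) * t ^ 2)) * t ^ a) := by
          apply mul_le_mul_of_nonneg_left (mul_le_mul_of_nonneg_right hb hta)
          positivity
      _ = 2 * Real.exp (2 * M ^ 2) * (t ^ (a+1) * Real.exp (-(1/2) * t ^ 2)) := by
          rw [e1]; ring
  have hbi : Integrable (fun t : ℝ =>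
      2 * Real.exp (2 * M ^ 2) * (t ^ (a+1) * Real.exp (-(1/2) * t ^ 2)))
      (volume.restrict (Set.Ioi (0:ℝ))) :=
    ((integrableOn_rpow_mul_exp_neg_mul_sq (by norm_num) (by linarith)).const_mul _)
  have hdiff : ∀ᵐ (t : ℝ) ∂(volume.restrict (Set.Ioi (0:ℝ))), ∀ z ∈ Metric.ball z₀ 1,
      HasDerivAt (fun z : ℂ => Complex.exp (-(t:ℂ) ^ 2 - 2 * z * t) * ((t ^ a : ℝ) : ℂ))
        ((-2 * (t:ℂ)) * (Complex.exp (-(t:ℂ) ^ 2 - 2 * z * t) * ((t ^ a : ℝ) : ℂ))) z := by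
    filter_upwards [] with t z _
    have h1 : HasDerivAt (fun z : ℂ => -(t:ℂ) ^ 2 - 2 * z * t) (-(2 * (t:ℂ))) z := by
      have h0 : HasDerivAt (fun z : ℂ => 2 * z * t) (2 * (t:ℂ)) z := by
        simpa using ((hasDerivAt_id z).const_mul 2).mul_const (t:ℂ)
      exact h0.const_sub (-(t:ℂ)^2)
    have h2 := (h1.cexp).mul_const ((t ^ a : ℝ) : ℂ)
    refine h2.congr_deriv ?_
    ring
  have key := hasDerivAt_integral_of_dominated_loc_of_deriv_le
    (μ := volume.restrict (Set.Ioi (0:ℝ)))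
    (F := fun z t => Complex.exp (-(t:ℂ) ^ 2 - 2 * z * t) * ((t ^ a : ℝ) : ℂ))
    (F' := fun z t => (-2 * (t:ℂ)) * (Complex.exp (-(t:ℂ) ^ 2 - 2 * z * t) * ((t ^ a : ℝ) : ℂ)))
    (x₀ := z₀) (Metric.ball_mem_nhds z₀ one_pos)
    (Filter.Eventually.of_forall fun z => Ga_meas a z)
    (Ga_integrable ha z₀)
    ((((continuous_const.mul Complex.continuous_ofReal : Continuous fun t : ℝ => (-2:ℂ) * (t:ℂ))).aestronglyMeasurable.mono_measure
        Measure.restrict_le_self).mul (Ga_meas a z₀)) hbound hbi hdiff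
  exact key.2.differentiableAt

lemma Fa_eq_re_Ga (a : ℝ) (x : ℝ) : Fa a x = (Ga a (x:ℂ)).re := by
  have h : Ga a (x:ℂ) = ((Fa a x : ℝ) : ℂ) := by
    rw [Ga, Fa]
    have hoc : ((∫ t in Set.Ioi (0:ℝ), Real.exp (-(t ^ 2) - 2 * x * t) * t ^ a : ℝ) : ℂ)
        = ∫ t in Set.Ioi (0:ℝ), ((Real.exp (-(t ^ 2) - 2 * x * t) * t ^ a : ℝ) : ℂ) :=
      (integral_ofReal (𝕜 := ℂ)).symm
    rw [hoc]
    apply setIntegral_congr_fun measurableSet_Ioi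
    intro t _
    show Complex.exp (-(t:ℂ) ^ 2 - 2 * (x:ℂ) * t) * ((t ^ a : ℝ) : ℂ)
      = ((Real.exp (-(t ^ 2) - 2 * x * t) * t ^ a : ℝ) : ℂ)
    rw [Complex.ofReal_mul, Complex.ofReal_exp]
    congr 1
    push_cast
    ring
  rw [h, Complex.ofReal_re]

lemma analyticOnNhd_Fa {a : ℝ} (ha : -1 < a) : AnalyticOnNhd ℝ (Fa a) Set.univ := by
  have hG : AnalyticOnNhd ℂ (Ga a) Set.univ :=
    (differentiable_Ga ha).differentiableOn.analyticOnNhd isOpen_univ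
  have hGr : AnalyticOnNhd ℝ (Ga a) Set.univ := hG.restrictScalars
  have h1 : AnalyticOnNhd ℝ (fun x : ℝ => (x:ℂ)) Set.univ :=
    Complex.ofRealCLM.analyticOnNhd _
  have h2 : AnalyticOnNhd ℝ (fun z : ℂ => z.re) Set.univ :=
    Complex.reCLM.analyticOnNhd _
  have heq : Fa a = fun x : ℝ => (Ga a (x:ℂ)).re := funext fun x => Fa_eq_re_Ga a x
  rw [heq]
  exact (h2.comp (hGr.comp h1 (Set.mapsTo_univ _ _)) (Set.mapsTo_univ _ _))


/-- `Φ` is smooth, its `n`-th derivative (`n ≥ 1`) equals `(2√β/σ̂)ⁿ · F_{a+n}(u(x))`, is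
positive, and the iterated derivatives satisfy the strict Turán-type inequalities
`(Φ⁽ⁿ⁾)² < Φ⁽ⁿ⁻¹⁾·Φ⁽ⁿ⁺¹⁾`; in particular `(Φ')² < Φ·Φ''`. -/
theorem Phi_derivatives_and_turan (β σh δ c : ℝ) (hβ : 0 < β) (hσ : 0 < σh) (hδ : 0 < δ) :
    ContDiff ℝ (⊤ : ℕ∞) (Phi β σh δ c) ∧
    (∀ n : ℕ, 1 ≤ n → ∀ x : ℝ,
      iteratedDeriv n (Phi β σh δ c) x =
        (2 * Real.sqrt β / σh) ^ n *
          Fa ((δ / β - 1) + n) ((c - β * x) / (Real.sqrt β * σh))) ∧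
    (∀ n : ℕ, 1 ≤ n → ∀ x : ℝ, 0 < iteratedDeriv n (Phi β σh δ c) x) ∧
    (∀ n : ℕ, 1 ≤ n → ∀ x : ℝ,
      (iteratedDeriv n (Phi β σh δ c) x) ^ 2 <
        iteratedDeriv (n - 1) (Phi β σh δ c) x * iteratedDeriv (n + 1) (Phi β σh δ c) x) ∧
    (∀ x : ℝ, (deriv (Phi β σh δ c) x) ^ 2 <
        Phi β σh δ c x * deriv (deriv (Phi β σh δ c)) x) := by
  set a : ℝ := δ / β - 1 with ha_def
  have ha : -1 < a := by
    have : 0 < δ / β := div_pos hδ hβ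
    rw [ha_def]; linarith
  set s : ℝ := Real.sqrt β with hs_def
  have hs : 0 < s := Real.sqrt_pos.2 hβ
  have hss : s * s = β := Real.mul_self_sqrt hβ.le
  set u : ℝ → ℝ := fun x => (c - β * x) / (s * σh) with hu_def
  set K : ℝ := 2 * s / σh with hK_def
  have hK : 0 < K := by positivity
  have hu : ∀ x : ℝ, HasDerivAt u (-(s / σh)) x := by
    intro x
    have h0 : HasDerivAt (fun x : ℝ => c - β * x) (-β) x := by
      simpa using ((hasDerivAt_id x).const_mul β).const_sub c
    have h1 := h0.div_const (s * σh)
    refine h1.congr_deriv ?_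
    field_simp
    nlinarith [hss]
  -- the key iterated derivative formula
  have hformula : ∀ n : ℕ, iteratedDeriv n (Phi β σh δ c) = fun x => K ^ n * Fa (a + n) (u x) := by
    intro n
    induction n with
    | zero =>
      funext x
      simp [iteratedDeriv_zero, Phi, ha_def, hu_def, hs_def]
    | succ n ih =>
      funext x
      have han : -1 < a + n := by
        have : (0:ℝ) ≤ n := Nat.cast_nonneg n
        linarith
      have hder : HasDerivAt (fun x => K ^ n * Fa (a + n) (u x))
          (K ^ (n+1) * Fa (a + (n+1 : ℕ)) (u x)) x := by
        have h1 := (hasDerivAt_Fa han (u x)).comp x (hu x)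
        have h2 := h1.const_mul (K ^ n)
        refine h2.congr_deriv ?_
        push_cast
        rw [hK_def]
        ring
      rw [iteratedDeriv_succ, ih]
      exact hder.deriv
  have hcd : ContDiff ℝ (⊤ : ℕ∞) (Phi β σh δ c) := by
    have huA : AnalyticOnNhd ℝ u Set.univ := by
      have : u = fun x : ℝ => (c - β * x) * (s * σh)⁻¹ := by
        funext x; rw [hu_def]; ring
      rw [this]
      exact ((analyticOnNhd_const.sub (analyticOnNhd_const.mul analyticOnNhd_id)).mul
        analyticOnNhd_const)
    have : Phi β σh δ c = fun x => Fa a (u x) := rfl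
    rw [this]
    exact (((analyticOnNhd_Fa ha).comp huA (Set.mapsTo_univ _ _)).contDiff)
  have hpos : ∀ n : ℕ, 1 ≤ n → ∀ x : ℝ, 0 < iteratedDeriv n (Phi β σh δ c) x := by
    intro n hn x
    rw [hformula n]
    have han : -1 < a + n := by
      have : (0:ℝ) ≤ n := Nat.cast_nonneg n
      linarith
    exact mul_pos (pow_pos hK n) (Fa_pos_s1 han (u x))
  have hturan : ∀ n : ℕ, 1 ≤ n → ∀ x : ℝ,
      (iteratedDeriv n (Phi β σh δ c) x) ^ 2 <
        iteratedDeriv (n - 1) (Phi β σh δ c) x * iteratedDeriv (n + 1) (Phi β σh δ c) x := by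
    intro n hn x
    rw [hformula n, hformula (n-1), hformula (n+1)]
    have hcast : ((n - 1 : ℕ) : ℝ) = (n : ℝ) - 1 := by
      have := Nat.cast_sub hn (R := ℝ); simpa using this
    have hn1 : (1:ℝ) ≤ (n:ℝ) := by exact_mod_cast hn
    have hb : 0 < a + n := by linarith
    have ht := Fa_turan hb (u x)
    have e1 : a + ((n - 1 : ℕ) : ℝ) = (a + n) - 1 := by rw [hcast]; ring
    have e2 : a + ((n + 1 : ℕ) : ℝ) = (a + n) + 1 := by push_cast; ring
    rw [e1, e2]
    have hKK : (K ^ n) ^ 2 = K ^ (n - 1) * K ^ (n + 1) := by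
      rw [← pow_mul, ← pow_add]
      congr 1
      omega
    calc (K ^ n * Fa (a + n) (u x)) ^ 2
        = (K ^ (n-1) * K ^ (n+1)) * Fa (a + n) (u x) ^ 2 := by rw [mul_pow, hKK]
      _ < (K ^ (n-1) * K ^ (n+1)) * (Fa ((a + n) - 1) (u x) * Fa ((a + n) + 1) (u x)) := by
          apply mul_lt_mul_of_pos_left ht
          positivity
      _ = K ^ (n-1) * Fa ((a + n) - 1) (u x) * (K ^ (n+1) * Fa ((a + n) + 1) (u x)) := by ring
  refine ⟨hcd, fun n hn x => by rw [hformula n], hpos, hturan, ?_⟩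
  intro x
  have h := hturan 1 le_rfl x
  have e0 : iteratedDeriv 0 (Phi β σh δ c) = Phi β σh δ c := iteratedDeriv_zero
  have e1 : iteratedDeriv 1 (Phi β σh δ c) = deriv (Phi β σh δ c) := iteratedDeriv_one
  have e2 : iteratedDeriv 2 (Phi β σh δ c) = deriv (deriv (Phi β σh δ c)) := by
    rw [iteratedDeriv_succ, iteratedDeriv_one]
  simpa [e0, e1, e2] using h
end
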